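/- Let N ≥ 3. The wheel poset H_N contains the standard example S_N as an induced subposet; consequently, the order dimension of H_N is at least N. -/

import Mathlib

/-- The cyclic interval ⟨i,j⟩ inside {1,…,N}: elements k with (k−i) mod N ≤ (j−i) mod N. -/
def cyc (N i j : ℕ) : Finset ℕ :=
  (Finset.Icc 1 N).filter (fun k => (k + N - i) % N ≤ (j + N - i) % N)

/-- Index pairs (i,j) of wheel elements: i,j ∈ [N] with j+1 ≢ i (mod N). -/
def wheelPairs (N : ℕ) : Finset (ℕ × ℕ) :=
  (Finset.Icc 1 N ×ˢ Finset.Icc 1 N).filter (fun p => (p.2 + 1) % N ≠ p.1 % N)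

/-- Ground set of the wheel H_N: the elements r_{i,j} (as `some (i,j)`) plus `none` = min. -/
def wheelGround (N : ℕ) : Finset (Option (ℕ × ℕ)) :=
  insert none ((wheelPairs N).image some)

/-- Order of the wheel: min below all, r_{i,j} ≤ r_{i',j'} iff ⟨i',j'⟩ ⊆ ⟨i,j⟩. -/
def wheelLe (N : ℕ) : Option (ℕ × ℕ) → Option (ℕ × ℕ) → Prop
  | none, _ => True
  | some _, none => False
  | some p, some q => cyc N q.1 q.2 ⊆ cyc N p.1 p.2

/-- The (reflexive) order of the standard example S_k on Fin k ⊕ Fin k: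
`inl i` is a_i, `inr j` is b_j, with a_i ≤ b_j iff i ≠ j. -/
def stdLe (k : ℕ) : (Fin k ⊕ Fin k) → (Fin k ⊕ Fin k) → Prop
  | .inl i, .inl j => i = j
  | .inl i, .inr j => i ≠ j
  | .inr _, .inl _ => False
  | .inr i, .inr j => i = j

/-- `r` has a realizer of size `n`: n linear orders whose intersection is `r`. -/
def realizes {α : Type*} (r : α → α → Prop) (n : ℕ) : Prop :=
  ∃ L : Fin n → α → α → Prop, (∀ m, IsLinearOrder α (L m)) ∧
    ∀ a b, r a b ↔ ∀ m, L m a b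

/-- Order dimension of the relation `r`. -/
noncomputable def odim {α : Type*} (r : α → α → Prop) : ℕ :=
  sInf {n | realizes r n}

/-!
The elements `a_i = r_{i+1,i-1}` and `b_j = r_{j,j}` of the wheel are the cyclic intervals
`[N] ∖ {i}` and `{j}`, and `{j} ⊆ [N] ∖ {i}` exactly when `i ≠ j`; since `N ≥ 3`, no
`[N] ∖ {i}` fits inside a singleton, so they span an induced copy of `S_N`.
In a realizer of any order containing these `a_i, b_j`, each pair `(a_i, b_i)` is reversed by
some linear order, and no linear order reverses two of them: from `b_i < a_i`, `b_j < a_j`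
and `a_i < b_j`, `a_j < b_i` we would get the cycle `a_i < b_j < a_j < b_i < a_i`.
Hence every realizer has at least `N` orders, and one exists because the wheel is a finite
partial order (Szpilrajn).
-/

section Realizer

variable {α : Type*} {r : α → α → Prop}

theorem isPartialOrder_adjoin_rel [IsPartialOrder α r] {a b : α} (hab : ¬ r a b) :
    IsPartialOrder α (fun x y => r x y ∨ (r x b ∧ r a y)) where
  refl x := Or.inl (refl x)
  trans := by
    rintro x y z (hxy | ⟨hxb, hay⟩) (hyz | ⟨hyb, haz⟩)
    · exact Or.inl (_root_.trans hxy hyz)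
    · exact Or.inr ⟨_root_.trans hxy hyb, haz⟩
    · exact Or.inr ⟨hxb, _root_.trans hay hyz⟩
    · exact Or.inr ⟨hxb, haz⟩
  antisymm := by
    rintro x y (hxy | ⟨hxb, hay⟩) (hyx | ⟨hyb, hax⟩)
    · exact antisymm hxy hyx
    · exact (hab (_root_.trans hax (_root_.trans hxy hyb))).elim
    · exact (hab (_root_.trans hay (_root_.trans hyx hxb))).elim
    · exact (hab (_root_.trans hax hxb)).elim

theorem exists_linearExtension_not_rel [IsPartialOrder α r] {a b : α} (hab : ¬ r a b) :
    ∃ s : α → α → Prop, IsLinearOrder α s ∧ r ≤ s ∧ ¬ s a b := by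
  have := isPartialOrder_adjoin_rel hab
  obtain ⟨s, hs, hrs⟩ := extend_partialOrder (fun x y => r x y ∨ (r x b ∧ r a y))
  refine ⟨s, hs, fun x y h => hrs x y (Or.inl h), fun hsab => ?_⟩
  have hsba : s b a := hrs b a (Or.inr ⟨refl b, refl a⟩)
  exact hab (antisymm hsab hsba ▸ refl a)

theorem exists_realizes_of_finite [Finite α] [IsPartialOrder α r] : ∃ n, realizes r n := by
  have hext (p : α × α) :
      ∃ s : α → α → Prop, IsLinearOrder α s ∧ r ≤ s ∧ (¬ r p.1 p.2 → ¬ s p.1 p.2) := by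
    by_cases hp : r p.1 p.2
    · obtain ⟨s, hs, hrs⟩ := extend_partialOrder r
      exact ⟨s, hs, hrs, absurd hp⟩
    · obtain ⟨s, hs, hrs, hsp⟩ := exists_linearExtension_not_rel hp
      exact ⟨s, hs, hrs, fun _ => hsp⟩
  choose s hs hrs hsp using hext
  obtain ⟨n, ⟨e⟩⟩ := Finite.exists_equiv_fin (α × α)
  refine ⟨n, fun m => s (e.symm m), fun m => hs _,
    fun a b => ⟨fun h m => hrs _ a b h, fun h => ?_⟩⟩
  by_contra hab
  exact hsp (a, b) hab (by simpa using h (e (a, b)))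

theorem realizes_odim (h : ∃ n, realizes r n) : realizes r (odim r) :=
  Nat.sInf_mem h

theorem le_of_realizes_of_rel_iff_ne {k n : ℕ} (a b : Fin k → α)
    (hab : ∀ i j, r (a i) (b j) ↔ i ≠ j) (h : realizes r n) : k ≤ n := by
  obtain ⟨L, hL, hrL⟩ := h
  have hrev (i : Fin k) : ∃ m, ¬ L m (a i) (b i) := by
    by_contra! hall
    exact (hab i i).mp ((hrL _ _).mpr hall) rfl
  choose g hg using hrev
  refine Fin.le_of_injective g fun i j hij => ?_
  by_contra hne
  have := hL (g i)
  have hbj : L (g i) (b j) (a j) := (total_of _ _ _).resolve_left (hij ▸ hg j)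
  have hai : L (g i) (a i) (b j) := (hrL _ _).mp ((hab i j).mpr hne) _
  have haj : L (g i) (a j) (b i) := (hrL _ _).mp ((hab j i).mpr (Ne.symm hne)) _
  exact hg i (_root_.trans hai (_root_.trans hbj haj))

end Realizer

instance (k : ℕ) : Std.Antisymm (stdLe k) where
  antisymm
    | .inl _, .inl _, h, _ => congrArg Sum.inl h
    | .inr _, .inr _, h, _ => congrArg Sum.inr h
    | .inl _, .inr _, _, h => h.elim
    | .inr _, .inl _, h, _ => h.elim

theorem Finset.erase_subset_erase_iff_of_mem {α : Type*} [DecidableEq α] {s : Finset α}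
    {a b : α} (ha : a ∈ s) : s.erase b ⊆ s.erase a ↔ a = b := by
  refine ⟨fun h => ?_, fun h => h ▸ subset_rfl⟩
  by_contra hab
  exact Finset.notMem_erase a s (h (Finset.mem_erase.mpr ⟨hab, ha⟩))

namespace Wheel

variable {N i j k i' j' t : ℕ}

def cycDist (N i k : ℕ) : ℕ := if i ≤ k then k - i else k + N - i

def cycSucc (N t : ℕ) : ℕ := if t = N then 1 else t + 1

def cycPred (N t : ℕ) : ℕ := if t = 1 then N else t - 1

theorem mod_eq_cycDist (hi : i ∈ Finset.Icc 1 N) (hk : k ∈ Finset.Icc 1 N) :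
    (k + N - i) % N = cycDist N i k := by
  rw [Finset.mem_Icc] at hi hk
  unfold cycDist
  split_ifs with h
  · rw [show k + N - i = k - i + N by omega, Nat.add_mod_right, Nat.mod_eq_of_lt (by omega)]
  · exact Nat.mod_eq_of_lt (by omega)

theorem mem_cyc (hi : i ∈ Finset.Icc 1 N) (hj : j ∈ Finset.Icc 1 N) :
    k ∈ cyc N i j ↔ k ∈ Finset.Icc 1 N ∧ cycDist N i k ≤ cycDist N i j := by
  unfold cyc
  rw [Finset.mem_filter, and_congr_right_iff]
  intro hk
  rw [mod_eq_cycDist hi hk, mod_eq_cycDist hi hj]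

theorem succ_mod_eq_mod_iff (hN : 2 ≤ N) (hi : i ∈ Finset.Icc 1 N) (hj : j ∈ Finset.Icc 1 N) :
    (j + 1) % N = i % N ↔ cycDist N i j = N - 1 := by
  rw [Finset.mem_Icc] at hi hj
  have hmod {t : ℕ} (h1 : 1 ≤ t) (h2 : t ≤ N + 1) :
      t % N = if t = N then 0 else if t = N + 1 then 1 else t := by
    split_ifs with h h'
    · simp [h]
    · rw [h', Nat.add_mod_left, Nat.mod_eq_of_lt (by omega)]
    · exact Nat.mod_eq_of_lt (by omega)
  rw [hmod (by omega) (by omega), hmod hi.1 (by omega)]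
  unfold cycDist
  split_ifs <;> grind

theorem mk_mem_wheelPairs (hN : 2 ≤ N) :
    (i, j) ∈ wheelPairs N ↔
      i ∈ Finset.Icc 1 N ∧ j ∈ Finset.Icc 1 N ∧ cycDist N i j ≠ N - 1 := by
  unfold wheelPairs
  rw [Finset.mem_filter, Finset.mem_product, and_assoc]
  refine and_congr_right fun hi => and_congr_right fun hj => ?_
  rw [Ne, succ_mod_eq_mod_iff hN hi hj]

theorem cycPred_mem_Icc (hk : k ∈ Finset.Icc 1 N) : cycPred N k ∈ Finset.Icc 1 N := by
  rw [Finset.mem_Icc] at hk ⊢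
  unfold cycPred
  split_ifs <;> omega

theorem cycSucc_mem_Icc (hk : k ∈ Finset.Icc 1 N) : cycSucc N k ∈ Finset.Icc 1 N := by
  rw [Finset.mem_Icc] at hk ⊢
  unfold cycSucc
  split_ifs <;> omega

theorem start_mem_cyc (hi : i ∈ Finset.Icc 1 N) (hj : j ∈ Finset.Icc 1 N) : i ∈ cyc N i j :=
  (mem_cyc hi hj).mpr ⟨hi, by simp [cycDist]⟩

theorem end_mem_cyc (hi : i ∈ Finset.Icc 1 N) (hj : j ∈ Finset.Icc 1 N) : j ∈ cyc N i j :=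
  (mem_cyc hi hj).mpr ⟨hj, le_rfl⟩

theorem cycDist_inj (hi : i ∈ Finset.Icc 1 N) (hj : j ∈ Finset.Icc 1 N)
    (hj' : j' ∈ Finset.Icc 1 N) (h : cycDist N i j = cycDist N i j') : j = j' := by
  rw [Finset.mem_Icc] at hi hj hj'
  unfold cycDist at h
  split_ifs at h <;> omega

theorem cycPred_start_not_mem_cyc (hi : i ∈ Finset.Icc 1 N) (hj : j ∈ Finset.Icc 1 N)
    (hij : cycDist N i j ≠ N - 1) : cycPred N i ∉ cyc N i j := by
  rw [mem_cyc hi hj, not_and]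
  intro _
  rw [Finset.mem_Icc] at hi hj
  unfold cycDist cycPred at *
  split_ifs at * <;> omega

theorem cycPred_mem_cyc (hi : i ∈ Finset.Icc 1 N) (hj : j ∈ Finset.Icc 1 N)
    (hk : k ∈ cyc N i j) (hki : k ≠ i) : cycPred N k ∈ cyc N i j := by
  rw [mem_cyc hi hj] at hk ⊢
  obtain ⟨hk, hd⟩ := hk
  refine ⟨cycPred_mem_Icc hk, ?_⟩
  rw [Finset.mem_Icc] at hi hj hk
  unfold cycDist cycPred at *
  split_ifs at * <;> omega

-- A proper cyclic interval determines its start: the only element whose predecessor is outside.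
theorem start_eq_of_cyc_eq (hi : i ∈ Finset.Icc 1 N) (hj : j ∈ Finset.Icc 1 N)
    (hi' : i' ∈ Finset.Icc 1 N) (hj' : j' ∈ Finset.Icc 1 N) (hij' : cycDist N i' j' ≠ N - 1)
    (h : cyc N i j = cyc N i' j') : i = i' := by
  by_contra hne
  refine cycPred_start_not_mem_cyc hi' hj' hij' ?_
  rw [← h]
  exact cycPred_mem_cyc hi hj (h ▸ start_mem_cyc hi' hj') (Ne.symm hne)

theorem cyc_injOn (hN : 2 ≤ N) :
    Set.InjOn (fun p : ℕ × ℕ => cyc N p.1 p.2) (wheelPairs N) := by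
  rintro ⟨i, j⟩ hp ⟨i', j'⟩ hq (h : cyc N i j = cyc N i' j')
  obtain ⟨hi, hj, -⟩ := (mk_mem_wheelPairs hN).mp hp
  obtain ⟨hi', hj', hij'⟩ := (mk_mem_wheelPairs hN).mp hq
  obtain rfl := start_eq_of_cyc_eq hi hj hi' hj' hij' h
  have hle := ((mem_cyc hi hj).mp (h ▸ end_mem_cyc hi hj')).2
  have hge := ((mem_cyc hi hj').mp (h ▸ end_mem_cyc hi hj)).2
  rw [cycDist_inj hi hj hj' (le_antisymm hge hle)]

theorem cyc_self (ht : t ∈ Finset.Icc 1 N) : cyc N t t = {t} := by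
  ext k
  rw [mem_cyc ht ht, Finset.mem_singleton]
  constructor
  · rintro ⟨hk, hd⟩
    rw [Finset.mem_Icc] at ht hk
    unfold cycDist at hd
    split_ifs at hd <;> omega
  · rintro rfl
    exact ⟨ht, le_rfl⟩

theorem cyc_cycSucc_cycPred (hN : 2 ≤ N) (ht : t ∈ Finset.Icc 1 N) :
    cyc N (cycSucc N t) (cycPred N t) = (Finset.Icc 1 N).erase t := by
  ext k
  rw [mem_cyc (cycSucc_mem_Icc ht) (cycPred_mem_Icc ht), Finset.mem_erase,
    and_comm (a := k ≠ t), and_congr_right_iff]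
  intro hk
  rw [Finset.mem_Icc] at ht hk
  unfold cycDist cycSucc cycPred
  split_ifs <;> omega

theorem self_mem_wheelPairs (hN : 2 ≤ N) (ht : t ∈ Finset.Icc 1 N) : (t, t) ∈ wheelPairs N := by
  refine (mk_mem_wheelPairs hN).mpr ⟨ht, ht, ?_⟩
  simp only [cycDist, le_refl, ite_true]
  omega

theorem cycSucc_cycPred_mem_wheelPairs (hN : 2 ≤ N) (ht : t ∈ Finset.Icc 1 N) :
    (cycSucc N t, cycPred N t) ∈ wheelPairs N := by
  refine (mk_mem_wheelPairs hN).mpr ⟨cycSucc_mem_Icc ht, cycPred_mem_Icc ht, ?_⟩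
  rw [Finset.mem_Icc] at ht
  unfold cycDist cycSucc cycPred
  split_ifs <;> omega

theorem some_mem_wheelGround {p : ℕ × ℕ} : some p ∈ wheelGround N ↔ p ∈ wheelPairs N := by
  simp [wheelGround]

theorem wheelLe_refl : ∀ x, wheelLe N x x
  | none => trivial
  | some _ => subset_rfl

theorem isPartialOrder_wheelLe (hN : 2 ≤ N) :
    IsPartialOrder {x // x ∈ wheelGround N} (fun x y => wheelLe N x.1 y.1) where
  refl x := wheelLe_refl x.1
  trans := by
    rintro ⟨_ | _, _⟩ ⟨_ | _, _⟩ ⟨_ | _, _⟩ hxy hyz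
    all_goals first | trivial | exact hxy.elim | exact hyz.elim | exact hyz.trans hxy
  antisymm := by
    rintro ⟨_ | p, hp⟩ ⟨_ | q, hq⟩ hpq hqp
    all_goals first | rfl | exact hpq.elim | exact hqp.elim | skip
    rw [some_mem_wheelGround] at hp hq
    simp only [Subtype.mk.injEq, Option.some.injEq]
    exact cyc_injOn hN hp hq (subset_antisymm hqp hpq)

theorem val_add_one_mem_Icc (i : Fin N) : (i : ℕ) + 1 ∈ Finset.Icc 1 N :=
  Finset.mem_Icc.mpr ⟨Nat.le_add_left 1 i, i.isLt⟩

-- `inl i ↦ a_{i+1} = r_{i+2,i}` and `inr j ↦ b_{j+1} = r_{j+1,j+1}`, shifting `Fin N` to `[1, N]`.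
def stdToWheel (N : ℕ) : Fin N ⊕ Fin N → Option (ℕ × ℕ)
  | .inl i => some (cycSucc N (i + 1), cycPred N (i + 1))
  | .inr j => some (j + 1, j + 1)

theorem stdToWheel_mem (hN : 2 ≤ N) : ∀ a, stdToWheel N a ∈ wheelGround N
  | .inl i =>
    some_mem_wheelGround.mpr (cycSucc_cycPred_mem_wheelPairs hN (val_add_one_mem_Icc i))
  | .inr j => some_mem_wheelGround.mpr (self_mem_wheelPairs hN (val_add_one_mem_Icc j))

theorem stdLe_iff_wheelLe (hN : 3 ≤ N) :
    ∀ a b, stdLe N a b ↔ wheelLe N (stdToWheel N a) (stdToWheel N b)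
  | .inl i, .inl i' => by
    change i = i' ↔ cyc N _ _ ⊆ cyc N _ _
    rw [cyc_cycSucc_cycPred (by omega) (val_add_one_mem_Icc i),
      cyc_cycSucc_cycPred (by omega) (val_add_one_mem_Icc i'),
      Finset.erase_subset_erase_iff_of_mem (val_add_one_mem_Icc i), Nat.add_right_cancel_iff,
      Fin.val_inj]
  | .inl i, .inr j => by
    change i ≠ j ↔ cyc N _ _ ⊆ cyc N _ _
    rw [cyc_cycSucc_cycPred (by omega) (val_add_one_mem_Icc i), cyc_self (val_add_one_mem_Icc j),
      Finset.singleton_subset_iff, Finset.mem_erase, and_iff_left (val_add_one_mem_Icc j), ne_eq,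
      ne_eq, Nat.add_right_cancel_iff, Fin.val_inj, eq_comm]
  | .inr j, .inl i => by
    change False ↔ cyc N _ _ ⊆ cyc N _ _
    rw [cyc_cycSucc_cycPred (by omega) (val_add_one_mem_Icc i), cyc_self (val_add_one_mem_Icc j),
      false_iff]
    intro h
    have hcard := Finset.card_le_card h
    rw [Finset.card_erase_of_mem (val_add_one_mem_Icc i), Nat.card_Icc,
      Finset.card_singleton] at hcard
    omega
  | .inr j, .inr j' => by
    change j = j' ↔ cyc N _ _ ⊆ cyc N _ _
    rw [cyc_self (val_add_one_mem_Icc j), cyc_self (val_add_one_mem_Icc j'),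
      Finset.singleton_subset_singleton, Nat.add_right_cancel_iff, Fin.val_inj, eq_comm]

end Wheel

theorem wheel_dim_ge (N : ℕ) (hN : 3 ≤ N) :
    (∃ f : (Fin N ⊕ Fin N) → {x : Option (ℕ × ℕ) // x ∈ wheelGround N},
      Function.Injective f ∧
      ∀ a b, stdLe N a b ↔ wheelLe N (f a).1 (f b).1) ∧
    N ≤ odim (fun x y : {x : Option (ℕ × ℕ) // x ∈ wheelGround N} =>
      wheelLe N x.1 y.1) := by
  have := Wheel.isPartialOrder_wheelLe (N := N) (by omega)
  let f a : {x // x ∈ wheelGround N} := ⟨Wheel.stdToWheel N a, Wheel.stdToWheel_mem (by omega) a⟩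
  have hf : ∀ a b, stdLe N a b ↔ wheelLe N (f a).1 (f b).1 := Wheel.stdLe_iff_wheelLe hN
  have hinj : f.Injective := fun a b hab => antisymm_of (stdLe N)
    ((hf a b).mpr (hab ▸ Wheel.wheelLe_refl _)) ((hf b a).mpr (hab ▸ Wheel.wheelLe_refl _))
  refine ⟨⟨f, hinj, hf⟩, ?_⟩
  exact le_of_realizes_of_rel_iff_ne (f ∘ .inl) (f ∘ .inr) (fun i j => (hf _ _).symm)
    (realizes_odim exists_realizes_of_finite)
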